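/- arXiv:2405.06420 — 2 statements merged into one kernel-verified Lean document; each statement's English description precedes it below -/
import Mathlib

section
/- Let f : ℝ → ℝ be α-continuous on [0,1], i.e. for every open G ⊆ ℝ the set {x ∈ [0,1] : f(x) ∈ G} is an α-set in the subspace topology of [0,1]. Then for every real q: there exists x ∈ [0,1] with f(x) > q if and only if there exists a rational r ∈ [0,1] with f(r) > q. -/
/-!
The set `S = {x ∈ [0,1] : f x > q}` is an α-set, so if it is nonempty its interior in `[0,1]` is
a nonempty open subset of `[0,1]`. Since `[0,1]` is the closure of its interior `(0,1)`, the
rationals are dense in `[0,1]`, hence meet that interior.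
-/

open Set

section

variable {X : Type*} [TopologicalSpace X]

theorem nonempty_interior_of_subset_closure_interior {s : Set X} (hne : s.Nonempty)
    (hs : s ⊆ closure (interior s)) : (interior s).Nonempty :=
  (hne.mono hs).of_closure

theorem Dense.preimage_val_of_subset_closure_interior {s D : Set X} (hD : Dense D)
    (hs : s ⊆ closure (interior s)) : Dense (Subtype.val ⁻¹' D : Set s) := by
  rw [Subtype.dense_iff, Subtype.image_preimage_coe]
  calc s ⊆ closure (interior s) := hs
    _ ⊆ closure (closure (interior s ∩ D)) :=
      closure_mono (hD.open_subset_closure_inter isOpen_interior)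
    _ ⊆ closure (s ∩ D) := by
      rw [closure_closure]
      exact closure_mono (inter_subset_inter_left D interior_subset)

end

theorem dense_rat_cast_unitInterval :
    Dense (Subtype.val ⁻¹' range ((↑) : ℚ → ℝ) : Set (Icc (0 : ℝ) 1)) :=
  Rat.denseRange_cast.preimage_val_of_subset_closure_interior
    (closure_interior_Icc zero_ne_one).symm.subset

theorem alphaContinuous_sup_rational (f : ℝ → ℝ)
    (hf : ∀ G : Set ℝ, IsOpen G →
      ({x : Set.Icc (0:ℝ) 1 | f ↑x ∈ G} : Set (Set.Icc (0:ℝ) 1)) ⊆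
        interior (closure (interior {x : Set.Icc (0:ℝ) 1 | f ↑x ∈ G}))) :
    ∀ q : ℝ, (∃ x ∈ Set.Icc (0:ℝ) 1, f x > q) ↔
      (∃ r : ℚ, (r : ℝ) ∈ Set.Icc (0:ℝ) 1 ∧ f r > q) := by
  intro q
  refine ⟨fun ⟨x, hx, hfx⟩ ↦ ?_, fun ⟨r, hr, hfr⟩ ↦ ⟨r, hr, hfr⟩⟩
  set S : Set (Icc (0 : ℝ) 1) := {y | f ↑y ∈ Ioi q}
  have hS_int : (interior S).Nonempty :=
    nonempty_interior_of_subset_closure_interior ⟨⟨x, hx⟩, hfx⟩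
      ((hf _ isOpen_Ioi).trans interior_subset)
  obtain ⟨y, ⟨r, hr⟩, hy⟩ := dense_rat_cast_unitInterval.exists_mem_open isOpen_interior hS_int
  have hyS : y ∈ S := interior_subset hy
  exact ⟨r, hr ▸ y.2, hr ▸ hyS⟩
end

section
/- Given f : ℝ → ℝ with f(r) ≠ 0 for every rational r ∈ [0,1], the function g_f is peripherally continuous: for every x ∈ ℝ and all open intervals U, V with x ∈ U and g_f(x) ∈ V, there exists an open set W ⊆ U with x ∈ W such that g_f maps the boundary of W into V. -/
open Classical in
/-- The function `g_f`. -/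
noncomputable def gf (f : ℝ → ℝ) (x : ℝ) : ℝ :=
  if ∃ q : ℚ, x + (q : ℝ) ∈ Set.Icc (0:ℝ) 1 ∧ f (x + (q : ℝ)) = 0 then 1 else 0

/-! `g_f` is constant on the cosets of `ℚ` in `ℝ`, and every point of an open interval `U` lies
in a subinterval of `U` whose endpoints are rational translates of it. On the frontier of that
subinterval `g_f` therefore takes the value it takes at the point itself. -/

open Set

lemma exists_rat_add_iff (P : ℝ → Prop) (x : ℝ) (q : ℚ) :
    (∃ r : ℚ, P (x + q + r)) ↔ ∃ r : ℚ, P (x + r) := by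
  constructor
  · rintro ⟨r, hr⟩
    exact ⟨q + r, by rwa [Rat.cast_add, ← add_assoc]⟩
  · rintro ⟨r, hr⟩
    exact ⟨r - q, by rwa [Rat.cast_sub, add_add_sub_cancel]⟩

lemma gf_add_rat (f : ℝ → ℝ) (x : ℝ) (q : ℚ) : gf f (x + q) = gf f x := by
  unfold gf
  rw [exists_rat_add_iff (fun y => y ∈ Icc (0:ℝ) 1 ∧ f y = 0)]

lemma exists_Ioo_rat_add_subset {x a b : ℝ} (hx : x ∈ Ioo a b) :
    ∃ q₁ q₂ : ℚ, x ∈ Ioo (x + q₁) (x + q₂) ∧ Ioo (x + q₁) (x + q₂) ⊆ Ioo a b := by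
  obtain ⟨q₁, haq₁, hq₁⟩ := exists_rat_btwn (sub_neg.2 hx.1)
  obtain ⟨q₂, hq₂, hq₂b⟩ := exists_rat_btwn (sub_pos.2 hx.2)
  exact ⟨q₁, q₂, ⟨by linarith, by linarith⟩, Ioo_subset_Ioo (by linarith) (by linarith)⟩

lemma exists_isOpen_frontier_eq_of_add_rat {g : ℝ → ℝ} (hg : ∀ x (q : ℚ), g (x + q) = g x)
    {x a b : ℝ} (hx : x ∈ Ioo a b) :
    ∃ W : Set ℝ, IsOpen W ∧ W ⊆ Ioo a b ∧ x ∈ W ∧ ∀ y ∈ frontier W, g y = g x := by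
  obtain ⟨q₁, q₂, hxW, hWU⟩ := exists_Ioo_rat_add_subset hx
  refine ⟨_, isOpen_Ioo, hWU, hxW, fun y hy => ?_⟩
  rw [frontier_Ioo (hxW.1.trans hxW.2)] at hy
  rcases hy with rfl | rfl <;> exact hg x _

theorem gf_peripherally_continuous_general (f : ℝ → ℝ) :
    ∀ x a b c d : ℝ, x ∈ Set.Ioo a b → gf f x ∈ Set.Ioo c d →
      ∃ W : Set ℝ, IsOpen W ∧ W ⊆ Set.Ioo a b ∧ x ∈ W ∧
        ∀ y ∈ frontier W, gf f y ∈ Set.Ioo c d := by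
  intro x a b c d hx hgx
  obtain ⟨W, hW, hWU, hxW, hfrontier⟩ :=
    exists_isOpen_frontier_eq_of_add_rat (gf_add_rat f) hx
  exact ⟨W, hW, hWU, hxW, fun y hy => hfrontier y hy ▸ hgx⟩

theorem gf_peripherally_continuous (f : ℝ → ℝ)
    (hf : ∀ r : ℚ, (r : ℝ) ∈ Set.Icc (0:ℝ) 1 → f r ≠ 0) :
    ∀ x a b c d : ℝ, x ∈ Set.Ioo a b → gf f x ∈ Set.Ioo c d →
      ∃ W : Set ℝ, IsOpen W ∧ W ⊆ Set.Ioo a b ∧ x ∈ W ∧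
        ∀ y ∈ frontier W, gf f y ∈ Set.Ioo c d :=
  gf_peripherally_continuous_general f
end
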